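/- With (L, [·,·], ρ) and (L', [·,·]', ρ') a dual pair of Lie–Rinehart algebras over R, the following identity holds for all a₁, a₂ ∈ L, α₁, α₂ ∈ L' and f ∈ R: D(a₁, f•a₂)(α₁,α₂) = f·D(a₁,a₂)(α₁,α₂) − ⟨a₂,α₂⟩·E(a₁,α₁)(f) + ⟨a₂,α₁⟩·E(a₁,α₂)(f). -/

import Mathlib

/-- A Lie–Rinehart algebra over a commutative `ℝ`-algebra `R`. -/
structure LieRinehart (R : Type*) [CommRing R] [Algebra ℝ R]
    (L : Type*) [AddCommGroup L] [Module R L] where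
  bracket : L → L → L
  bracket_add_left : ∀ x y z : L, bracket (x + y) z = bracket x z + bracket y z
  bracket_add_right : ∀ x y z : L, bracket x (y + z) = bracket x y + bracket x z
  bracket_real_left : ∀ (r : ℝ) (x y : L),
    bracket ((algebraMap ℝ R r) • x) y = (algebraMap ℝ R r) • bracket x y
  bracket_real_right : ∀ (r : ℝ) (x y : L),
    bracket x ((algebraMap ℝ R r) • y) = (algebraMap ℝ R r) • bracket x y
  bracket_antisymm : ∀ x y : L, bracket x y = - bracket y x
  bracket_jacobi : ∀ x y z : L,
    bracket x (bracket y z) = bracket (bracket x y) z + bracket y (bracket x z)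
  anchor : L →ₗ[R] Derivation ℝ R R
  anchor_bracket : ∀ x y : L, anchor (bracket x y) = ⁅anchor x, anchor y⁆
  leibniz : ∀ (f : R) (x y : L),
    bracket x (f • y) = f • bracket x y + (anchor x f) • y

/-- A dual pair of Lie–Rinehart algebras over `R`: two Lie–Rinehart algebras `L`, `L'`
with a nondegenerate `R`-bilinear pairing, Lie derivative operators `𝓛 : L × L' → L'`
and `𝓛 : L' × L → L` characterized by the usual formulas, and a map `d : R → L'`
characterized by `⟨a, d f⟩ = ρ(a)(f)`. -/
structure LieRinehartDualPair (R : Type*) [CommRing R] [Algebra ℝ R]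
    (L L' : Type*) [AddCommGroup L] [Module R L] [AddCommGroup L'] [Module R L'] where
  lr : LieRinehart R L
  lr' : LieRinehart R L'
  pair : L →ₗ[R] L' →ₗ[R] R
  nondeg_left : ∀ a : L, (∀ α : L', pair a α = 0) → a = 0
  nondeg_right : ∀ α : L', (∀ a : L, pair a α = 0) → α = 0
  lie : L → L' → L'
  lie' : L' → L → L
  lie_spec : ∀ (a a' : L) (α : L'),
    pair a' (lie a α) = lr.anchor a (pair a' α) - pair (lr.bracket a a') α
  lie'_spec : ∀ (α α' : L') (a : L),
    pair (lie' α a) α' = lr'.anchor α (pair a α') - pair a (lr'.bracket α α')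
  d : R → L'
  d_spec : ∀ (a : L) (f : R), pair a (d f) = lr.anchor a f

variable {R : Type*} [CommRing R] [Algebra ℝ R]
variable {L L' : Type*} [AddCommGroup L] [Module R L] [AddCommGroup L'] [Module R L']

/-- `(δa)(α₁,α₂) = ρ'(α₁)⟨a,α₂⟩ − ρ'(α₂)⟨a,α₁⟩ − ⟨a,[α₁,α₂]'⟩`. -/
def LieRinehartDualPair.delta (P : LieRinehartDualPair R L L') (a : L) (α₁ α₂ : L') : R :=
  P.lr'.anchor α₁ (P.pair a α₂) - P.lr'.anchor α₂ (P.pair a α₁)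
    - P.pair a (P.lr'.bracket α₁ α₂)

/-- `[δa₁, a₂](α₁,α₂) = −ρ(a₂)((δa₁)(α₁,α₂)) + (δa₁)(𝓛_{a₂}α₁, α₂) + (δa₁)(α₁, 𝓛_{a₂}α₂)`. -/
def LieRinehartDualPair.deltaBracket (P : LieRinehartDualPair R L L')
    (a₁ a₂ : L) (α₁ α₂ : L') : R :=
  - P.lr.anchor a₂ (P.delta a₁ α₁ α₂) + P.delta a₁ (P.lie a₂ α₁) α₂
    + P.delta a₁ α₁ (P.lie a₂ α₂)

/-- The bialgebroid defect
`D(a₁,a₂)(α₁,α₂) = (δ[a₁,a₂])(α₁,α₂) − [δa₁,a₂](α₁,α₂) − [a₁,δa₂](α₁,α₂)`,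
where `[a₁, δa₂] = −[δa₂, a₁]`. -/
def LieRinehartDualPair.D (P : LieRinehartDualPair R L L') (a₁ a₂ : L) (α₁ α₂ : L') : R :=
  P.delta (P.lr.bracket a₁ a₂) α₁ α₂ - P.deltaBracket a₁ a₂ α₁ α₂
    + P.deltaBracket a₂ a₁ α₁ α₂

/-- `E(a,α)(f) = [ρ(a),ρ'(α)](f) − ρ'(𝓛_a α)(f) + ρ(𝓛_α a)(f) − ρ'(d f)(⟨a,α⟩)`. -/
def LieRinehartDualPair.E (P : LieRinehartDualPair R L L') (a : L) (α : L') (f : R) : R :=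
  ⁅P.lr.anchor a, P.lr'.anchor α⁆ f - P.lr'.anchor (P.lie a α) f
    + P.lr.anchor (P.lie' α a) f - P.lr'.anchor (P.d f) (P.pair a α)

/-!
For each `a`, `δa` is `R`-bilinear and alternating in `(α₁, α₂)`, so rescaling `a₂` by `f`
only produces non-tensorial terms through `𝓛_{f a₂} α = f 𝓛_{a₂} α + ⟨a₂, α⟩ d f`, through
`δ(f a) = f δa + ρ'(·) f ∧ ⟨a, ·⟩`, and through the Leibniz rule for `[a₁, f a₂]`. Collected,
they are exactly the multiples of `⟨a₂, α⟩` of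
`E(a₁, α)(f) = ρ(a₁) ρ'(α) f − ρ'(α) ρ(a₁) f − ρ'(𝓛_{a₁} α) f + (δa₁)(α, d f)`.
-/

namespace LieRinehart

variable {M : Type*} [AddCommGroup M] [Module R M]

lemma bracket_smul_left (Q : LieRinehart R M) (f : R) (x y : M) :
    Q.bracket (f • x) y = f • Q.bracket x y - Q.anchor y f • x := by
  rw [Q.bracket_antisymm, Q.leibniz, neg_add, ← smul_neg, ← Q.bracket_antisymm,
    ← sub_eq_add_neg]

end LieRinehart

namespace LieRinehartDualPair

variable (P : LieRinehartDualPair R L L')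

lemma lie_smul (f : R) (a : L) (α : L') :
    P.lie (f • a) α = f • P.lie a α + P.pair a α • P.d f := by
  refine sub_eq_zero.mp (P.nondeg_right _ fun a' => ?_)
  simp only [map_sub, map_add, map_smul, P.lie_spec, P.lr.bracket_smul_left, P.d_spec,
    LinearMap.sub_apply, LinearMap.smul_apply, Derivation.smul_apply, smul_eq_mul]
  ring

lemma delta_swap (a : L) (α₁ α₂ : L') : P.delta a α₂ α₁ = - P.delta a α₁ α₂ := by
  simp only [delta, P.lr'.bracket_antisymm α₂ α₁, map_neg]
  ring

lemma delta_add_left (a : L) (α β γ : L') :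
    P.delta a (α + β) γ = P.delta a α γ + P.delta a β γ := by
  simp only [delta, map_add, P.lr'.bracket_add_left, Derivation.add_apply]
  ring

lemma delta_smul_left (a : L) (f : R) (α β : L') :
    P.delta a (f • α) β = f * P.delta a α β := by
  simp only [delta, map_smul, map_sub, P.lr'.bracket_smul_left, Derivation.smul_apply,
    Derivation.leibniz, smul_eq_mul]
  ring

lemma delta_add_right (a : L) (α β γ : L') :
    P.delta a α (β + γ) = P.delta a α β + P.delta a α γ := by
  rw [P.delta_swap, P.delta_add_left, P.delta_swap a β, P.delta_swap a γ, neg_add]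

lemma delta_smul_right (a : L) (f : R) (α β : L') :
    P.delta a α (f • β) = f * P.delta a α β := by
  rw [P.delta_swap, P.delta_smul_left, P.delta_swap a β, mul_neg]

lemma delta_add (a b : L) (α₁ α₂ : L') :
    P.delta (a + b) α₁ α₂ = P.delta a α₁ α₂ + P.delta b α₁ α₂ := by
  simp only [delta, map_add, LinearMap.add_apply]
  ring

lemma delta_smul (f : R) (a : L) (α₁ α₂ : L') :
    P.delta (f • a) α₁ α₂ = f * P.delta a α₁ α₂
      + P.lr'.anchor α₁ f * P.pair a α₂ - P.lr'.anchor α₂ f * P.pair a α₁ := by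
  simp only [delta, map_smul, LinearMap.smul_apply, smul_eq_mul, Derivation.leibniz]
  ring

lemma E_eq (a : L) (α : L') (f : R) :
    P.E a α f = P.lr.anchor a (P.lr'.anchor α f) - P.lr'.anchor α (P.lr.anchor a f)
      - P.lr'.anchor (P.lie a α) f + P.delta a α (P.d f) := by
  have anchor_lie' : P.lr.anchor (P.lie' α a) f
      = P.lr'.anchor α (P.lr.anchor a f) - P.pair a (P.lr'.bracket α (P.d f)) := by
    rw [← P.d_spec, P.lie'_spec, P.d_spec]
  rw [E, delta, Derivation.commutator_apply, anchor_lie', P.d_spec]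
  ring

lemma deltaBracket_smul_right (f : R) (a b : L) (α₁ α₂ : L') :
    P.deltaBracket a (f • b) α₁ α₂ = f * P.deltaBracket a b α₁ α₂
      + P.pair b α₁ * P.delta a (P.d f) α₂ + P.pair b α₂ * P.delta a α₁ (P.d f) := by
  simp only [deltaBracket, P.lie_smul, P.delta_add_left, P.delta_add_right,
    P.delta_smul_left, P.delta_smul_right, map_smul, Derivation.smul_apply, smul_eq_mul]
  ring

lemma deltaBracket_smul_left (f : R) (a b : L) (α₁ α₂ : L') :
    P.deltaBracket (f • a) b α₁ α₂ = f * P.deltaBracket a b α₁ α₂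
      - P.lr.anchor b f * P.delta a α₁ α₂
      - P.pair a α₂ * (P.lr.anchor b (P.lr'.anchor α₁ f) - P.lr'.anchor (P.lie b α₁) f)
      + P.pair a α₁ * (P.lr.anchor b (P.lr'.anchor α₂ f) - P.lr'.anchor (P.lie b α₂) f)
      - P.lr'.anchor α₁ f * P.pair (P.lr.bracket b a) α₂
      + P.lr'.anchor α₂ f * P.pair (P.lr.bracket b a) α₁ := by
  simp only [deltaBracket, P.delta_smul, P.lie_spec, map_add, map_sub, Derivation.leibniz,
    smul_eq_mul]
  ring

end LieRinehartDualPair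

/-- behaviour of the bialgebroid defect `D` under rescaling of the second
argument. -/
theorem D_smul_second
    (P : LieRinehartDualPair R L L') :
    ∀ (a₁ a₂ : L) (α₁ α₂ : L') (f : R),
      P.D a₁ (f • a₂) α₁ α₂
        = f * P.D a₁ a₂ α₁ α₂
          - P.pair a₂ α₂ * P.E a₁ α₁ f
          + P.pair a₂ α₁ * P.E a₁ α₂ f := by
  intro a₁ a₂ α₁ α₂ f
  rw [LieRinehartDualPair.D, LieRinehartDualPair.D, P.lr.leibniz, P.delta_add, P.delta_smul,
    P.delta_smul, P.deltaBracket_smul_right, P.deltaBracket_smul_left, P.E_eq, P.E_eq,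
    P.delta_swap a₁ α₂ (P.d f)]
  ring
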